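/- arXiv:2107.05795 — 4 statements merged into one kernel-verified Lean document; each statement's English description precedes it below -/
import Mathlib

section
/- Star-merging inequality for B-kernels: fix d ≥ 5 and W ≥ 1 on the torus ℤ_L^d with B_{xy} = W^{-2}⟨x-y⟩^{-(d-2)}, ⟨x⟩ = ‖x‖_L + W. There is a constant C = C(d, k) such that for any k ≥ 2 and points x₁,…,x_k, y: ∏_{i=1}^k B_{x_i y} ≤ C · B_{x₁x₂} · ∑_{i=1}^k B_{y x_i} ∏_{j ≠ 1,2,i} B_{x_j x_i}. -/
set_option linter.unusedSectionVars false



/-- The periodic `ℓ^∞` distance to the origin on the discrete torus `ℤ_L^d = (ZMod L)^d`. -/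
def torusNorm (L d : ℕ) (x : Fin d → ZMod L) : ℕ :=
  Finset.univ.sup fun i => min (x i).val (L - (x i).val)

/-- The kernel `B_{xy} = W^{-2} ⟨x-y⟩^{-(d-2)}` with `⟨x⟩ = ‖x‖_L + W`. -/
noncomputable def Bker (L d : ℕ) (W : ℝ) (x y : Fin d → ZMod L) : ℝ :=
  1 / (W ^ 2 * ((torusNorm L d (x - y) : ℝ) + W) ^ (d - 2))

section helpers
variable {L d : ℕ} [NeZero L]

lemma torusNorm_neg (a : Fin d → ZMod L) : torusNorm L d (-a) = torusNorm L d a := by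
  unfold torusNorm
  congr 1
  funext i
  rw [← ZMod.valMinAbs_natAbs_eq_min, ← ZMod.valMinAbs_natAbs_eq_min, Pi.neg_apply,
    ZMod.natAbs_valMinAbs_neg]

lemma torusNorm_add_le (a b : Fin d → ZMod L) :
    torusNorm L d (a + b) ≤ torusNorm L d a + torusNorm L d b := by
  apply Finset.sup_le
  intro i _
  rw [Pi.add_apply, ← ZMod.valMinAbs_natAbs_eq_min]
  calc (a i + b i).valMinAbs.natAbs
      ≤ ((a i).valMinAbs + (b i).valMinAbs).natAbs := ZMod.natAbs_valMinAbs_add_le _ _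
    _ ≤ (a i).valMinAbs.natAbs + (b i).valMinAbs.natAbs := Int.natAbs_add_le _ _
    _ = min ((a i).val) (L - (a i).val) + min ((b i).val) (L - (b i).val) := by
        rw [ZMod.valMinAbs_natAbs_eq_min, ZMod.valMinAbs_natAbs_eq_min]
    _ ≤ _ := add_le_add
        (Finset.le_sup (f := fun j => min ((a j).val) (L - (a j).val)) (Finset.mem_univ i))
        (Finset.le_sup (f := fun j => min ((b j).val) (L - (b j).val)) (Finset.mem_univ i))

lemma torusNorm_sub_le (u v w : Fin d → ZMod L) :
    torusNorm L d (u - v) ≤ torusNorm L d (u - w) + torusNorm L d (w - v) := by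
  have : u - v = (u - w) + (w - v) := by abel
  rw [this]
  exact torusNorm_add_le _ _

variable {W : ℝ} (hW : 1 ≤ W)

include hW

lemma Bker_pos (u v : Fin d → ZMod L) : 0 < Bker L d W u v := by
  have h0 : (0:ℝ) < W := lt_of_lt_of_le one_pos hW
  have h1 : (0:ℝ) < (torusNorm L d (u - v) : ℝ) + W := by positivity
  exact div_pos one_pos (mul_pos (pow_pos h0 2) (pow_pos h1 _))

lemma Bker_le_one (u v : Fin d → ZMod L) : Bker L d W u v ≤ 1 := by
  have h0 : (0:ℝ) < W := lt_of_lt_of_le one_pos hW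
  have h1 : (1:ℝ) ≤ (torusNorm L d (u - v) : ℝ) + W := by
    have : (0:ℝ) ≤ (torusNorm L d (u - v) : ℝ) := Nat.cast_nonneg _
    linarith
  have h2 : (1:ℝ) ≤ W ^ 2 := one_le_pow₀ hW
  have h3 : (1:ℝ) ≤ ((torusNorm L d (u - v) : ℝ) + W) ^ (d - 2) := one_le_pow₀ h1
  rw [Bker, div_le_one (by nlinarith)]
  nlinarith

lemma Bker_symm (u v : Fin d → ZMod L) : Bker L d W u v = Bker L d W v u := by
  unfold Bker
  rw [show v - u = -(u - v) by abel, torusNorm_neg]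

lemma Bker_le_key {u v w : Fin d → ZMod L}
    (h : torusNorm L d (w - v) ≤ torusNorm L d (u - v)) :
    Bker L d W u v ≤ 2 ^ (d - 2) * Bker L d W u w := by
  have h0 : (0:ℝ) < W := lt_of_lt_of_le one_pos hW
  set m := d - 2
  set A : ℝ := (torusNorm L d (u - w) : ℝ) + W with hA
  set Bv : ℝ := (torusNorm L d (u - v) : ℝ) + W with hB
  have hApos : 0 < A := by positivity
  have hBpos : 0 < Bv := by positivity
  have htri : A ≤ 2 * Bv := by
    have t1 : torusNorm L d (u - w) ≤ torusNorm L d (u - v) + torusNorm L d (v - w) :=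
      torusNorm_sub_le u w v
    have t2 : torusNorm L d (v - w) = torusNorm L d (w - v) := by
      rw [show v - w = -(w - v) by abel, torusNorm_neg]
    have t3 : torusNorm L d (u - w) ≤ 2 * torusNorm L d (u - v) := by omega
    have t4 : (torusNorm L d (u - w) : ℝ) ≤ 2 * (torusNorm L d (u - v) : ℝ) := by
      exact_mod_cast t3
    rw [hA, hB]; linarith
  have hpow : A ^ m ≤ (2 * Bv) ^ m := pow_le_pow_left₀ hApos.le htri m
  rw [Bker, Bker, ← hA, ← hB, mul_one_div, div_le_div_iff₀ (by positivity) (by positivity)]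
  calc 1 * (W ^ 2 * A ^ m) = W ^ 2 * A ^ m := by ring
    _ ≤ W ^ 2 * (2 * Bv) ^ m := by
        exact mul_le_mul_of_nonneg_left hpow (by positivity)
    _ = 2 ^ m * (W ^ 2 * Bv ^ m) := by rw [mul_pow]; ring

end helpers

/-- Star-merging inequality for B-kernels: fix `d ≥ 5` and `k ≥ 2`.  There is a constant
`C = C(d,k)` such that for all `W ≥ 1`, all tori `ℤ_L^d`, and all points `x₁,…,x_k, y`:
`∏_{i=1}^k B_{x_i y} ≤ C · B_{x₁x₂} · ∑_{i=1}^k B_{y x_i} ∏_{j ≠ 1,2,i} B_{x_j x_i}`. -/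
theorem star_merging (d : ℕ) (hd : 5 ≤ d) (k : ℕ) (hk : 2 ≤ k) :
    ∃ C : ℝ, 0 < C ∧
      ∀ (L : ℕ) [NeZero L] (W : ℝ), 1 ≤ W →
      ∀ (x : Fin k → (Fin d → ZMod L)) (y : Fin d → ZMod L),
        ∏ i, Bker L d W (x i) y
          ≤ C * Bker L d W (x ⟨0, by omega⟩) (x ⟨1, by omega⟩) *
            ∑ i, (Bker L d W y (x i) *
              ∏ j ∈ Finset.univ \ {(⟨0, by omega⟩ : Fin k), ⟨1, by omega⟩, i},
                Bker L d W (x j) (x i)) := by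
  refine ⟨2 ^ ((d - 2) * (k + 1)), by positivity, ?_⟩
  intro L _ W hW x y
  set e0 : Fin k := ⟨0, by omega⟩ with he0
  set e1 : Fin k := ⟨1, by omega⟩ with he1
  obtain ⟨i₀, -, hmin⟩ := Finset.exists_min_image Finset.univ
    (fun i => torusNorm L d (x i - y)) ⟨e0, Finset.mem_univ _⟩
  simp only [Finset.mem_univ, forall_true_left] at hmin
  have hmin' : ∀ j, torusNorm L d (x i₀ - y) ≤ torusNorm L d (x j - y) := hmin
  set S : Finset (Fin k) := {e0, e1, i₀} with hSdef
  set T : Finset (Fin k) := Finset.univ \ S with hTdef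
  have hpos : ∀ u v : Fin d → ZMod L, 0 < Bker L d W u v := fun u v => Bker_pos hW u v
  have h2m : (1:ℝ) ≤ 2 ^ (d - 2) := one_le_pow₀ one_le_two
  -- Step A : product over T
  have hA : ∏ j ∈ T, Bker L d W (x j) y
      ≤ (2 ^ (d - 2)) ^ k * ∏ j ∈ T, Bker L d W (x j) (x i₀) := by
    calc ∏ j ∈ T, Bker L d W (x j) y
        ≤ ∏ j ∈ T, (2 ^ (d - 2) * Bker L d W (x j) (x i₀)) := by
          apply Finset.prod_le_prod (fun j _ => (hpos _ _).le)
          intro j _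
          exact Bker_le_key hW (hmin' j)
      _ = (2 ^ (d - 2)) ^ T.card * ∏ j ∈ T, Bker L d W (x j) (x i₀) := by
          rw [Finset.prod_mul_distrib, Finset.prod_const]
      _ ≤ (2 ^ (d - 2)) ^ k * ∏ j ∈ T, Bker L d W (x j) (x i₀) := by
          apply mul_le_mul_of_nonneg_right _ (Finset.prod_nonneg fun j _ => (hpos _ _).le)
          apply pow_le_pow_right₀ h2m
          calc T.card ≤ Finset.univ.card := Finset.card_le_card (Finset.sdiff_subset)
            _ = k := by simp
  -- Step B : product over S
  have he01 : e0 ≠ e1 := by simp [he0, he1, Fin.ext_iff]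
  have hB01 : ∏ j ∈ S, Bker L d W (x j) y
      ≤ 2 ^ (d - 2) * (Bker L d W (x e0) (x e1) * Bker L d W y (x i₀)) := by
    have hsym : Bker L d W y (x i₀) = Bker L d W (x i₀) y := Bker_symm hW _ _
    rcases eq_or_ne i₀ e0 with h0 | h0
    · have hSeq : S = {e0, e1} := by
        rw [hSdef, h0]; ext j; simp only [Finset.mem_insert, Finset.mem_singleton]; tauto
      rw [hSeq, Finset.prod_pair he01, hsym, h0]
      have k1 : Bker L d W (x e1) y ≤ 2 ^ (d - 2) * Bker L d W (x e1) (x e0) := by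
        apply Bker_le_key hW
        have := hmin' e1; rwa [h0] at this
      rw [Bker_symm hW (x e1) (x e0)] at k1
      nlinarith [mul_le_mul_of_nonneg_left k1 (hpos (x e0) y).le, hpos (x e0) y]
    · rcases eq_or_ne i₀ e1 with h1 | h1
      · have hSeq : S = {e0, e1} := by
          rw [hSdef, h1]; ext j; simp only [Finset.mem_insert, Finset.mem_singleton]; tauto
        rw [hSeq, Finset.prod_pair he01, hsym, h1]
        have k1 : Bker L d W (x e0) y ≤ 2 ^ (d - 2) * Bker L d W (x e0) (x e1) := by
          apply Bker_le_key hW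
          have := hmin' e0; rwa [h1] at this
        nlinarith [mul_le_mul_of_nonneg_right k1 (hpos (x e1) y).le, hpos (x e1) y, hpos (x e0) (x e1)]
      · have hne0 : e0 ∉ ({e1, i₀} : Finset (Fin k)) := by
          simp [he01, Ne.symm h0]
        have hne1 : e1 ∉ ({i₀} : Finset (Fin k)) := by simp [Ne.symm h1]
        rw [hSdef, Finset.prod_insert hne0, Finset.prod_insert hne1, Finset.prod_singleton, hsym]
        have hone0 : Bker L d W (x e0) y ≤ 1 := Bker_le_one hW _ _
        have hone1 : Bker L d W (x e1) y ≤ 1 := Bker_le_one hW _ _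
        have key : Bker L d W (x e0) y * Bker L d W (x e1) y
            ≤ 2 ^ (d - 2) * Bker L d W (x e0) (x e1) := by
          rcases le_total (torusNorm L d (x e1 - y)) (torusNorm L d (x e0 - y)) with hc | hc
          · have k1 : Bker L d W (x e0) y ≤ 2 ^ (d - 2) * Bker L d W (x e0) (x e1) :=
              Bker_le_key hW hc
            nlinarith [mul_le_mul_of_nonneg_left hone1 (hpos (x e0) y).le,
              mul_le_mul_of_nonneg_right k1 (hpos (x e1) y).le, hpos (x e1) y, hpos (x e0) y]
          · have k1 : Bker L d W (x e1) y ≤ 2 ^ (d - 2) * Bker L d W (x e1) (x e0) :=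
              Bker_le_key hW hc
            rw [Bker_symm hW (x e1) (x e0)] at k1
            nlinarith [mul_le_mul_of_nonneg_right hone0 (hpos (x e1) y).le,
              mul_le_mul_of_nonneg_left k1 (hpos (x e0) y).le, hpos (x e1) y, hpos (x e0) y]
        nlinarith [mul_le_mul_of_nonneg_right key (hpos (x i₀) y).le, hpos (x i₀) y]
  -- combine
  have hsplit : (∏ j ∈ T, Bker L d W (x j) y) * ∏ j ∈ S, Bker L d W (x j) y
      = ∏ i, Bker L d W (x i) y := Finset.prod_sdiff (Finset.subset_univ S)
  have hterm : Bker L d W y (x i₀) * ∏ j ∈ T, Bker L d W (x j) (x i₀)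
      ≤ ∑ i, (Bker L d W y (x i) *
        ∏ j ∈ Finset.univ \ {e0, e1, i}, Bker L d W (x j) (x i)) := by
    apply Finset.single_le_sum (f := fun i => Bker L d W y (x i) *
        ∏ j ∈ Finset.univ \ {e0, e1, i}, Bker L d W (x j) (x i))
      (fun i _ => mul_nonneg (hpos _ _).le (Finset.prod_nonneg fun j _ => (hpos _ _).le))
      (Finset.mem_univ i₀)
  have hc : ((2:ℝ) ^ (d - 2)) ^ k * 2 ^ (d - 2) = 2 ^ ((d - 2) * (k + 1)) := by
    rw [← pow_mul, ← pow_add]; ring_nf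
  calc ∏ i, Bker L d W (x i) y
      = (∏ j ∈ T, Bker L d W (x j) y) * ∏ j ∈ S, Bker L d W (x j) y := hsplit.symm
    _ ≤ ((2 ^ (d - 2)) ^ k * ∏ j ∈ T, Bker L d W (x j) (x i₀)) *
        (2 ^ (d - 2) * (Bker L d W (x e0) (x e1) * Bker L d W y (x i₀))) := by
        apply mul_le_mul hA hB01 (Finset.prod_nonneg fun j _ => (hpos _ _).le)
          (mul_nonneg (by positivity) (Finset.prod_nonneg fun j _ => (hpos _ _).le))
    _ = 2 ^ ((d - 2) * (k + 1)) * Bker L d W (x e0) (x e1) *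
        (Bker L d W y (x i₀) * ∏ j ∈ T, Bker L d W (x j) (x i₀)) := by
        rw [← hc]; ring
    _ ≤ _ := by
        apply mul_le_mul_of_nonneg_left hterm (mul_nonneg (by positivity) (hpos _ _).le)
end

section
/- Nesting of isolated vertex sets: let G be a finite connected multigraph with two disjoint edge sets E₁ (the black net) and E₂ (the blue net) each containing a spanning tree of the vertex set V (so G is doubly connected), and suppose there is a distinguished external vertex v₀ ∈ V adjacent to V∖{v₀}. Call a subset M ⊆ V∖{v₀} isolated if exactly two edges of E₁ ∪ E₂ join M to its complement. Then any two isolated subsets M₁, M₂ satisfy M₁ ⊆ M₂, or M₂ ⊆ M₁, or M₁ ∩ M₂ = ∅. -/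
/-- One step along an edge of the multigraph with endpoint maps `ea`, `eb`, using only edges in
the set `F`. -/
def StepRel {V E : Type*} (ea eb : E → V) (F : Set E) (x y : V) : Prop :=
  ∃ e ∈ F, (ea e = x ∧ eb e = y) ∨ (ea e = y ∧ eb e = x)

/-- The edge set `F` contains a spanning tree, i.e. the subgraph `(V, F)` is connected. -/
def Connects {V E : Type*} (ea eb : E → V) (F : Set E) : Prop :=
  ∀ x y : V, Relation.ReflTransGen (StepRel ea eb F) x y

/-- The edge boundary of a vertex set `M`: the edges of `F` with exactly one endpoint in `M`. -/
def edgeBoundary {V E : Type*} [DecidableEq V] [Fintype E] [DecidableEq E]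
    (ea eb : E → V) (F : Finset E) (M : Finset V) : Finset E :=
  F.filter fun e => (ea e ∈ M ∧ eb e ∉ M) ∨ (ea e ∉ M ∧ eb e ∈ M)

lemma bd_ne {V E : Type*} [DecidableEq V] [Fintype E] [DecidableEq E]
    (ea eb : E → V) (F : Finset E) (h : Connects ea eb (↑F : Set E))
    (S : Finset V) (x y : V) (hx : x ∈ S) (hy : y ∉ S) :
    (edgeBoundary ea eb F S).Nonempty := by
  have main : ∀ z, Relation.ReflTransGen (StepRel ea eb (↑F : Set E)) x z → z ∉ S →
      (edgeBoundary ea eb F S).Nonempty := by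
    intro z hpath
    induction hpath with
    | refl => intro hz; exact absurd hx hz
    | @tail b c hab hbc ih =>
        intro hc
        by_cases hb : b ∈ S
        · obtain ⟨e, heF, hcase⟩ := hbc
          refine ⟨e, Finset.mem_filter.mpr ⟨Finset.mem_coe.mp heF, ?_⟩⟩
          rcases hcase with ⟨u1, u2⟩ | ⟨u1, u2⟩
          · left; rw [u1, u2]; exact ⟨hb, hc⟩
          · right; rw [u1, u2]; exact ⟨hc, hb⟩
        · exact ih hb
  exact main y (h x y) hy

lemma bd_submod {V E : Type*} [DecidableEq V] [Fintype E] [DecidableEq E]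
    (ea eb : E → V) (F : Finset E) (A B : Finset V) :
    (edgeBoundary ea eb F (A ∩ B)).card + (edgeBoundary ea eb F (A ∪ B)).card ≤
      (edgeBoundary ea eb F A).card + (edgeBoundary ea eb F B).card := by
  classical
  simp only [edgeBoundary, Finset.card_filter]
  rw [← Finset.sum_add_distrib, ← Finset.sum_add_distrib]
  apply Finset.sum_le_sum
  intro e _
  by_cases h1 : ea e ∈ A <;> by_cases h2 : ea e ∈ B <;>
    by_cases h3 : eb e ∈ A <;> by_cases h4 : eb e ∈ B <;>
    simp [h1, h2, h3, h4, Finset.mem_inter, Finset.mem_union]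

lemma bd_posimod {V E : Type*} [DecidableEq V] [Fintype E] [DecidableEq E]
    (ea eb : E → V) (F : Finset E) (A B : Finset V) :
    (edgeBoundary ea eb F (A \ B)).card + (edgeBoundary ea eb F (B \ A)).card ≤
      (edgeBoundary ea eb F A).card + (edgeBoundary ea eb F B).card := by
  classical
  simp only [edgeBoundary, Finset.card_filter]
  rw [← Finset.sum_add_distrib, ← Finset.sum_add_distrib]
  apply Finset.sum_le_sum
  intro e _
  by_cases h1 : ea e ∈ A <;> by_cases h2 : ea e ∈ B <;>
    by_cases h3 : eb e ∈ A <;> by_cases h4 : eb e ∈ B <;>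
    simp [h1, h2, h3, h4, Finset.mem_sdiff]

lemma bd_parity {V E : Type*} [DecidableEq V] [Fintype E] [DecidableEq E]
    (ea eb : E → V) (F : Finset E) (S T : Finset V) (hd : Disjoint S T) :
    ((edgeBoundary ea eb F (S ∪ T)).card : ZMod 2) =
      ((edgeBoundary ea eb F S).card : ZMod 2) + ((edgeBoundary ea eb F T).card : ZMod 2) := by
  classical
  have hST : ∀ v, v ∈ S → v ∉ T := fun v hv => Finset.disjoint_left.mp hd hv
  simp only [edgeBoundary, Finset.card_filter]
  push_cast
  rw [← Finset.sum_add_distrib]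
  apply Finset.sum_congr rfl
  intro e _
  by_cases h1 : ea e ∈ S <;> by_cases h2 : ea e ∈ T <;>
    by_cases h3 : eb e ∈ S <;> by_cases h4 : eb e ∈ T <;>
    first
      | exact absurd h2 (hST _ h1)
      | exact absurd h4 (hST _ h3)
      | (simp [h1, h2, h3, h4, Finset.mem_union] <;> decide)

/-- Nesting of isolated vertex sets: let `G` be a finite connected multigraph with two disjoint
edge sets `E₁` (black net) and `E₂` (blue net), each containing a spanning tree of `V`, with a
distinguished external vertex `v₀` adjacent to `V∖{v₀}`.  Call `M ⊆ V∖{v₀}` isolated if exactly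
two edges of `E₁ ∪ E₂` join `M` to its complement.  Then any two isolated subsets `M₁`, `M₂`
satisfy `M₁ ⊆ M₂`, or `M₂ ⊆ M₁`, or `M₁ ∩ M₂ = ∅`. -/
theorem isolated_subsets_nested {V E : Type*} [Fintype V] [DecidableEq V]
    [Fintype E] [DecidableEq E]
    (ea eb : E → V) (E₁ E₂ : Finset E) (hdisj : Disjoint E₁ E₂)
    (h1 : Connects ea eb (↑E₁ : Set E)) (h2 : Connects ea eb (↑E₂ : Set E))
    (v₀ : V)
    (hadj : ∃ e ∈ E₁ ∪ E₂, (ea e = v₀ ∧ eb e ≠ v₀) ∨ (eb e = v₀ ∧ ea e ≠ v₀))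
    (M₁ M₂ : Finset V) (hM₁ : v₀ ∉ M₁) (hM₂ : v₀ ∉ M₂)
    (hiso₁ : (edgeBoundary ea eb (E₁ ∪ E₂) M₁).card = 2)
    (hiso₂ : (edgeBoundary ea eb (E₁ ∪ E₂) M₂).card = 2) :
    M₁ ⊆ M₂ ∨ M₂ ⊆ M₁ ∨ M₁ ∩ M₂ = ∅ := by
  by_contra hcon
  push_neg at hcon
  obtain ⟨hns1, hns2, hne⟩ := hcon
  obtain ⟨a, ha1, ha2⟩ := Finset.not_subset.mp hns1
  obtain ⟨b, hb2, hb1⟩ := Finset.not_subset.mp hns2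
  obtain ⟨c, hc⟩ := hne
  rw [Finset.mem_inter] at hc
  -- splitting the total boundary into colors
  have split : ∀ S : Finset V, (edgeBoundary ea eb (E₁ ∪ E₂) S).card =
      (edgeBoundary ea eb E₁ S).card + (edgeBoundary ea eb E₂ S).card := by
    intro S
    unfold edgeBoundary
    rw [Finset.filter_union,
      Finset.card_union_of_disjoint (Finset.disjoint_filter_filter hdisj)]
  -- lower bound from connectivity
  have lb : ∀ (F : Finset E), Connects ea eb (↑F : Set E) → ∀ S : Finset V, ∀ w ∈ S,
      v₀ ∉ S → 1 ≤ (edgeBoundary ea eb F S).card := by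
    intro F hF S w hw hv
    exact Finset.card_pos.mpr (bd_ne ea eb F hF S w v₀ hw hv)
  -- v₀ avoidance facts
  have hvC : v₀ ∉ M₁ ∩ M₂ := by simp [hM₁]
  have hvU : v₀ ∉ M₁ ∪ M₂ := by simp [hM₁, hM₂]
  have hvP : v₀ ∉ M₁ \ M₂ := by simp [hM₁]
  have hvQ : v₀ ∉ M₂ \ M₁ := by simp [hM₂]
  -- witnesses
  have haP : a ∈ M₁ \ M₂ := Finset.mem_sdiff.mpr ⟨ha1, ha2⟩
  have hbQ : b ∈ M₂ \ M₁ := Finset.mem_sdiff.mpr ⟨hb2, hb1⟩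
  have hcC : c ∈ M₁ ∩ M₂ := Finset.mem_inter.mpr hc
  have hcU : c ∈ M₁ ∪ M₂ := Finset.mem_union_left _ hc.1
  -- the eight color lower bounds
  have l1C := lb E₁ h1 (M₁ ∩ M₂) c hcC hvC
  have l2C := lb E₂ h2 (M₁ ∩ M₂) c hcC hvC
  have l1U := lb E₁ h1 (M₁ ∪ M₂) c hcU hvU
  have l2U := lb E₂ h2 (M₁ ∪ M₂) c hcU hvU
  have l1P := lb E₁ h1 (M₁ \ M₂) a haP hvP
  have l2P := lb E₂ h2 (M₁ \ M₂) a haP hvP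
  have l1Q := lb E₁ h1 (M₂ \ M₁) b hbQ hvQ
  have l2Q := lb E₂ h2 (M₂ \ M₁) b hbQ hvQ
  have l1M := lb E₁ h1 M₁ c hc.1 hM₁
  have l2M := lb E₂ h2 M₁ c hc.1 hM₁
  -- submodularity and posimodularity for the total boundary
  have sub := bd_submod ea eb (E₁ ∪ E₂) M₁ M₂
  have pos := bd_posimod ea eb (E₁ ∪ E₂) M₁ M₂
  have s1 := split M₁
  have sC := split (M₁ ∩ M₂)
  have sU := split (M₁ ∪ M₂)
  have sP := split (M₁ \ M₂)
  have sQ := split (M₂ \ M₁)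
  rw [hiso₁, hiso₂] at sub pos
  -- derive the three key equalities
  have e1M : (edgeBoundary ea eb E₁ M₁).card = 1 := by omega
  have e1C : (edgeBoundary ea eb E₁ (M₁ ∩ M₂)).card = 1 := by omega
  have e1P : (edgeBoundary ea eb E₁ (M₁ \ M₂)).card = 1 := by omega
  -- parity contradiction
  have hpar := bd_parity ea eb E₁ (M₁ \ M₂) (M₁ ∩ M₂) (Finset.disjoint_sdiff_inter M₁ M₂)
  rw [Finset.sdiff_union_inter] at hpar
  rw [e1M, e1C, e1P] at hpar
  norm_num at hpar
  exact absurd hpar (by decide)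
end

section
/- Quotient preserves double connectivity: let G be a finite multigraph with disjoint edge sets E₁, E₂, and let S ⊆ V(G) be such that the induced subgraph on S is doubly connected (E₁∩E(S) and E₂∩E(S) each contain a spanning tree of S). Then G is doubly connected (E₁ and E₂ each contain a spanning tree of V(G)) if and only if the quotient graph G/S, obtained by contracting S to a single vertex (keeping E₁, E₂ labels on non-contracted edges), is doubly connected. -/
/-- Connectivity of the subgraph induced on a vertex set `S`, using edges of `F` with both
endpoints in `S`. -/
def ConnectsOn {V E : Type*} (ea eb : E → V) (F : Set E) (S : Set V) : Prop :=
  ∀ u ∈ S, ∀ v ∈ S,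
    Relation.ReflTransGen (fun x y => x ∈ S ∧ y ∈ S ∧ StepRel ea eb F x y) u v

/-- Connectivity of the quotient graph `G/S`, obtained by contracting `S` to a single vertex
(so that any two vertices of `S` are identified) and removing the edges internal to `S`. -/
def QuotConnects {V E : Type*} (ea eb : E → V) (F : Set E) (S : Set V) : Prop :=
  ∀ x y : V, Relation.ReflTransGen
    (fun x y => (x ∈ S ∧ y ∈ S) ∨
      ∃ e ∈ F, ¬(ea e ∈ S ∧ eb e ∈ S) ∧
        ((ea e = x ∧ eb e = y) ∨ (ea e = y ∧ eb e = x))) x y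

lemma quot_iff {V E : Type*} (ea eb : E → V) (F : Set E) (S : Set V)
    (hS : ConnectsOn ea eb F S) :
    Connects ea eb F ↔ QuotConnects ea eb F S := by
  constructor
  · intro h x y
    refine Relation.ReflTransGen.mono ?_ x y (h x y)
    rintro a b ⟨e, he, hab⟩
    by_cases hin : ea e ∈ S ∧ eb e ∈ S
    · rcases hab with ⟨h1, h2⟩ | ⟨h1, h2⟩
      · exact Or.inl ⟨h1 ▸ hin.1, h2 ▸ hin.2⟩
      · exact Or.inl ⟨h2 ▸ hin.2, h1 ▸ hin.1⟩
    · exact Or.inr ⟨e, he, hin, hab⟩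
  · intro h x y
    have key : ∀ a b : V,
        ((a ∈ S ∧ b ∈ S) ∨ ∃ e ∈ F, ¬(ea e ∈ S ∧ eb e ∈ S) ∧
          ((ea e = a ∧ eb e = b) ∨ (ea e = b ∧ eb e = a))) →
        Relation.ReflTransGen (StepRel ea eb F) a b := by
      rintro a b (⟨ha, hb⟩ | ⟨e, he, _, hab⟩)
      · exact Relation.ReflTransGen.mono (fun u v (h : u ∈ S ∧ v ∈ S ∧ StepRel ea eb F u v) => h.2.2) a b (hS a ha b hb)
      · exact Relation.ReflTransGen.single ⟨e, he, hab⟩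
    induction h x y with
    | refl => exact .refl
    | tail _ hstep ih => exact ih.trans (key _ _ hstep)

/-- Quotient preserves double connectivity: if the induced subgraph on `S` is doubly connected
(`E₁` and `E₂` each connect `S` within `S`), then `G` is doubly connected (`E₁`, `E₂` each
contain a spanning tree of all vertices) if and only if the contraction `G/S` is doubly
connected. -/
theorem quotient_doubly_connected {V E : Type*} [Finite V] [Finite E]
    (ea eb : E → V) (E₁ E₂ : Set E) (hdisj : Disjoint E₁ E₂)
    (S : Set V) (hSne : S.Nonempty)
    (hS₁ : ConnectsOn ea eb E₁ S) (hS₂ : ConnectsOn ea eb E₂ S) :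
    (Connects ea eb E₁ ∧ Connects ea eb E₂) ↔
      (QuotConnects ea eb E₁ S ∧ QuotConnects ea eb E₂ S) := by
  rw [quot_iff ea eb E₁ S hS₁, quot_iff ea eb E₂ S hS₂]
end

section
/- Attaching a pendant path creates redundant edges (Claim A.8): let G be a doubly connected multigraph. Form G_new by adding a new vertex M_new together with one black (diffusive) edge b₁ from M_new to some vertex M₁ of G, and two blue (solid) edges b₂ from M_new to M₂ and b₃ from M_new to M₃ (M₁, M₂, M₃ vertices of G, not necessarily distinct). Then both b₂ and b₃ are redundant in G_new: deleting either one of them leaves a doubly connected graph. -/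
/-- Doubly connected property, avoiding the edges in `Avoid`: there exist disjoint edge sets
`F₁` (black net of diffusive edges) and `F₂` (blue net of blue-solid-or-diffusive edges),
none of them in `Avoid`, each containing a spanning tree. -/
def DoublyConnectedAvoiding {V E : Type*} (ea eb : E → V) (canBlack canBlue : E → Prop)
    (Avoid : Set E) : Prop :=
  ∃ F₁ F₂ : Set E, Disjoint F₁ F₂ ∧
    (∀ e ∈ F₁, canBlack e ∧ e ∉ Avoid) ∧ (∀ e ∈ F₂, canBlue e ∧ e ∉ Avoid) ∧
    Connects ea eb F₁ ∧ Connects ea eb F₂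

section Helpers
variable {V E : Type*} (ea eb : E → V) (M₁ M₂ M₃ : V)

private def ea' : E ⊕ Fin 3 → Option V :=
  Sum.elim (fun e => some (ea e)) (fun _ => (none : Option V))

private def eb' : E ⊕ Fin 3 → Option V :=
  Sum.elim (fun e => some (eb e))
    (fun i => some (if i = 0 then M₁ else if i = 1 then M₂ else M₃))

private lemma lift_path {F : Set E} {G : Set (E ⊕ Fin 3)} (hFG : Sum.inl '' F ⊆ G)
    {x y : V} (h : Relation.ReflTransGen (StepRel ea eb F) x y) :
    Relation.ReflTransGen (StepRel (ea' ea) (eb' eb M₁ M₂ M₃) G) (some x) (some y) := by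
  induction h with
  | refl => exact Relation.ReflTransGen.refl
  | tail _ hstep ih =>
      obtain ⟨e, heF, hcase⟩ := hstep
      refine ih.tail ⟨Sum.inl e, hFG ⟨e, heF, rfl⟩, ?_⟩
      rcases hcase with ⟨h1, h2⟩ | ⟨h1, h2⟩
      · exact Or.inl ⟨by simp [ea', h1], by simp [eb', h2]⟩
      · exact Or.inr ⟨by simp [ea', h1], by simp [eb', h2]⟩

private lemma connects_lift {F : Set E} (hF : Connects ea eb F) (j : Fin 3) :
    Connects (ea' ea) (eb' eb M₁ M₂ M₃) (Sum.inl '' F ∪ {Sum.inr j}) := by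
  set Mj := (if j = 0 then M₁ else if j = 1 then M₂ else M₃) with hMj
  have hstep : StepRel (ea' ea) (eb' eb M₁ M₂ M₃) (Sum.inl '' F ∪ {Sum.inr j})
      (none : Option V) (some Mj) :=
    ⟨Sum.inr j, Or.inr rfl, Or.inl ⟨rfl, by simp [eb', hMj]⟩⟩
  have hstep' : StepRel (ea' ea) (eb' eb M₁ M₂ M₃) (Sum.inl '' F ∪ {Sum.inr j})
      (some Mj) (none : Option V) :=
    ⟨Sum.inr j, Or.inr rfl, Or.inr ⟨rfl, by simp [eb', hMj]⟩⟩
  intro x y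
  have hlift : ∀ a b : V, Relation.ReflTransGen (StepRel (ea' ea) (eb' eb M₁ M₂ M₃)
      (Sum.inl '' F ∪ {Sum.inr j})) (some a) (some b) :=
    fun a b => lift_path ea eb M₁ M₂ M₃ Set.subset_union_left (hF a b)
  match x, y with
  | none, none => exact Relation.ReflTransGen.refl
  | none, some b => exact (Relation.ReflTransGen.single hstep).trans (hlift Mj b)
  | some a, none => exact (hlift a Mj).trans (Relation.ReflTransGen.single hstep')
  | some a, some b => exact hlift a b

end Helpers

/-- Attaching a pendant path creates redundant edges (Claim A.8): let `G` be doubly connected.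
Form `G_new` by adding a new vertex `M_new` (encoded as `none : Option V`) together with one
black (diffusive) edge `b₁` from `M_new` to `M₁` and two blue (solid) edges `b₂` from `M_new`
to `M₂` and `b₃` from `M_new` to `M₃`.  Then both `b₂` and `b₃` are redundant in `G_new`:
deleting either one of them leaves a doubly connected graph.  The new edges are encoded as
`Sum.inr 0 = b₁`, `Sum.inr 1 = b₂`, `Sum.inr 2 = b₃`. -/


theorem pendant_path_redundant {V E : Type*} (ea eb : E → V)
    (canBlack canBlue : E → Prop) (M₁ M₂ M₃ : V)
    (hDC : DoublyConnectedAvoiding ea eb canBlack canBlue ∅) :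
    DoublyConnectedAvoiding (V := Option V) (E := E ⊕ Fin 3)
      (Sum.elim (fun e => some (ea e)) (fun _ => (none : Option V)))
      (Sum.elim (fun e => some (eb e))
        (fun i => some (if i = 0 then M₁ else if i = 1 then M₂ else M₃)))
      (Sum.elim canBlack (fun i => i = 0))
      (Sum.elim canBlue (fun i => i ≠ 0))
      {Sum.inr 1}
    ∧ DoublyConnectedAvoiding (V := Option V) (E := E ⊕ Fin 3)
      (Sum.elim (fun e => some (ea e)) (fun _ => (none : Option V)))
      (Sum.elim (fun e => some (eb e))
        (fun i => some (if i = 0 then M₁ else if i = 1 then M₂ else M₃)))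
      (Sum.elim canBlack (fun i => i = 0))
      (Sum.elim canBlue (fun i => i ≠ 0))
      {Sum.inr 2} := by
  obtain ⟨F₁, F₂, hdisj, hB1, hB2, hC1, hC2⟩ := hDC
  have mk : ∀ j : Fin 3, j ≠ 0 → ∀ k : Fin 3, k ≠ 0 → j ≠ k →
      DoublyConnectedAvoiding (V := Option V) (E := E ⊕ Fin 3)
        (Sum.elim (fun e => some (ea e)) (fun _ => (none : Option V)))
        (Sum.elim (fun e => some (eb e))
          (fun i => some (if i = 0 then M₁ else if i = 1 then M₂ else M₃)))
        (Sum.elim canBlack (fun i => i = 0))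
        (Sum.elim canBlue (fun i => i ≠ 0))
        {Sum.inr k} := by
    intro j hj0 k hk0 hjk
    refine ⟨Sum.inl '' F₁ ∪ {Sum.inr 0}, Sum.inl '' F₂ ∪ {Sum.inr j}, ?_, ?_, ?_,
      connects_lift ea eb M₁ M₂ M₃ hC1 0, connects_lift ea eb M₁ M₂ M₃ hC2 j⟩
    · rw [Set.disjoint_union_left]
      constructor <;> rw [Set.disjoint_union_right]
      · refine ⟨?_, ?_⟩
        · exact Set.disjoint_image_image fun a ha b hb h =>
            hdisj.ne_of_mem ha hb (Sum.inl.inj h)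
        · simp [Set.disjoint_singleton_right]
      · refine ⟨by simp [Set.disjoint_singleton_left], ?_⟩
        simp [Set.disjoint_singleton, hj0.symm]
    · rintro e (⟨a, ha, rfl⟩ | he)
      · exact ⟨(hB1 a ha).1, by simp⟩
      · simp only [Set.mem_singleton_iff] at he
        subst he
        exact ⟨rfl, by simp [Ne.symm hk0]⟩
    · rintro e (⟨a, ha, rfl⟩ | he)
      · exact ⟨(hB2 a ha).1, by simp⟩
      · simp only [Set.mem_singleton_iff] at he
        subst he
        refine ⟨hj0, by simp [hjk]⟩
  exact ⟨mk 2 (by decide) 1 (by decide) (by decide), mk 1 (by decide) 2 (by decide) (by decide)⟩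
end
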